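/- There are 2^{ℵ_0} many countable Borel quasi-orders, pairwise incomparable up to Borel bireducibility, each of whose symmetrizations is a universal countable Borel equivalence relation. Specifically, if E is a countable Borel equivalence relation on a standard Borel space X with Borel linear order ≤ and all E-classes of size at least 2, then the asymmetric quasi-order E(≤) = E ∩ ≤ satisfies: any Borel reduction from E(≤) ∨ E_∞ to F(≤) ∨ E_∞ (disjoint unions with a universal countable Borel equivalence relation E_∞) restricts to a Borel reduction from E(≤) to F(≤), and hence induces a Borel reduction from E to F; moreover the symmetrization of E(≤) ∨ E_∞ is Δ(X) ∨ E_∞, which is universal. -/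

import Mathlib

/-- Borel reducibility of binary relations. -/
def BorelReducible {X Y : Type} [MeasurableSpace X] [MeasurableSpace Y]
    (Q : X → X → Prop) (Q' : Y → Y → Prop) : Prop :=
  ∃ f : X → Y, Measurable f ∧ ∀ a b : X, Q a b ↔ Q' (f a) (f b)

/-- Countable Borel equivalence relation. -/
def IsCBER {X : Type} [MeasurableSpace X] (E : X → X → Prop) : Prop :=
  Equivalence E ∧ MeasurableSet {p : X × X | E p.1 p.2} ∧ ∀ x, {y | E x y}.Countable

/-- Countable Borel quasi-order. -/
def IsCBQO {X : Type} [MeasurableSpace X] (Q : X → X → Prop) : Prop :=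
  Reflexive Q ∧ Transitive Q ∧ MeasurableSet {p : X × X | Q p.1 p.2} ∧
    ∀ x, {y | Q y x}.Countable

/-- A universal countable Borel equivalence relation. -/
def IsUnivCBER {Z : Type} [MeasurableSpace Z] (E : Z → Z → Prop) : Prop :=
  IsCBER E ∧ ∀ (Y : Type) [MeasurableSpace Y] [StandardBorelSpace Y]
    (F : Y → Y → Prop), IsCBER F → BorelReducible F E

/-- Disjoint union of two relations, on the disjoint union of the spaces. -/
def SumRel {X Z : Type} (R : X → X → Prop) (S : Z → Z → Prop) :
    X ⊕ Z → X ⊕ Z → Prop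
  | .inl a, .inl b => R a b
  | .inr a, .inr b => S a b
  | _, _ => False


/-!
`E(≤)` is antisymmetric, so its symmetrization is equality, and `Δ(X) ∨ E_∞` is universal because
`E_∞` is. Since no `E`-class is a singleton and `≤` is total, every point of `X` lies in a strict
pair of `E(≤)`. A reduction sends strict pairs to strict pairs and the symmetric `E_∞` has none, so
it maps `X` into `X'`; totality of the orders then recovers `E` from `E(≤)`.

For the family we replace the Adams–Kechris relations by countable partial orders: the disjoint
union of the crowns `a i < b i, b (i + 1)` (`i ∈ ZMod (n + 2)`) for `n ∈ U`, joined with `E_∞` and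
moved to Cantor space by a Borel isomorphism. A reduction maps each crown onto a crown of the same
size, so it forces `U ⊆ V`, and `parityCode` turns distinct sets into `⊆`-incomparable ones.
-/

open Function

section CountableBorelRelations

variable {X Y : Type} [MeasurableSpace X] [MeasurableSpace Y]

lemma IsCBQO.comap {Q : Y → Y → Prop} (hQ : IsCBQO Q) {f : X → Y} (hf : Measurable f)
    (hinj : Injective f) : IsCBQO (fun a b => Q (f a) (f b)) :=
  ⟨fun x => hQ.1 (f x), fun _ _ _ h h' => hQ.2.1 h h',
    hQ.2.2.1.preimage (hf.prodMap hf), fun x => (hQ.2.2.2 (f x)).preimage hinj⟩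

lemma IsCBER.comap {E : Y → Y → Prop} (hE : IsCBER E) {f : X → Y} (hf : Measurable f)
    (hinj : Injective f) : IsCBER (fun a b => E (f a) (f b)) :=
  ⟨⟨fun x => hE.1.refl (f x), hE.1.symm, hE.1.trans⟩,
    hE.2.1.preimage (hf.prodMap hf), fun x => (hE.2.2 (f x)).preimage hinj⟩

lemma IsCBER.isCBQO {E : X → X → Prop} (hE : IsCBER E) : IsCBQO E :=
  ⟨hE.1.refl, fun _ _ _ => hE.1.trans, hE.2.1, fun x =>
    (hE.2.2 x).mono fun _ => hE.1.symm⟩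

lemma IsUnivCBER.comap {E : Y → Y → Prop} (hE : IsUnivCBER E) (e : X ≃ᵐ Y) :
    IsUnivCBER (fun a b => E (e a) (e b)) := by
  refine ⟨hE.1.comap e.measurable e.injective, fun W _ _ F hF => ?_⟩
  obtain ⟨f, hf, hfF⟩ := hE.2 W F hF
  exact ⟨e.symm ∘ f, e.symm.measurable.comp hf, fun a b => by simpa using hfF a b⟩

lemma isCBER_eq [MeasurableEq X] : IsCBER (fun a b : X => a = b) :=
  ⟨eq_equivalence, measurableSet_diagonal, fun x => (Set.countable_singleton x).mono
    fun _ h => h.symm⟩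

lemma IsUnivCBER.uncountable {E : X → X → Prop} (hE : IsUnivCBER E) : Uncountable X := by
  obtain ⟨f, -, hf⟩ := hE.2 ℝ _ isCBER_eq
  have hinj : Injective f := fun a b hab => (hf a b).2 (hab ▸ hE.1.1.refl (f a))
  exact hinj.uncountable

end CountableBorelRelations

lemma measurableEmbedding_inl {α β : Type} [MeasurableSpace α] [MeasurableSpace β] :
    MeasurableEmbedding (@Sum.inl α β) :=
  ⟨Sum.inl_injective, measurable_inl, fun _ hs => hs.inl_image⟩

lemma measurableEmbedding_inr {α β : Type} [MeasurableSpace α] [MeasurableSpace β] :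
    MeasurableEmbedding (@Sum.inr α β) :=
  ⟨Sum.inr_injective, measurable_inr, fun _ hs => hs.inr_image⟩

lemma Set.Countable.of_preimage_inl_inr {α β : Type} {s : Set (α ⊕ β)}
    (hl : (Sum.inl ⁻¹' s).Countable) (hr : (Sum.inr ⁻¹' s).Countable) : s.Countable :=
  Set.image_preimage_inl_union_image_preimage_inr s ▸ (hl.image _).union (hr.image _)

namespace SumRel

variable {α β α' β' : Type} {R : α → α → Prop} {S : β → β → Prop}
  {R' : α' → α' → Prop} {S' : β' → β' → Prop}

@[simp] lemma inl_inl {a b : α} : SumRel R S (.inl a) (.inl b) ↔ R a b := Iff.rfl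

@[simp] lemma inr_inr {a b : β} : SumRel R S (.inr a) (.inr b) ↔ S a b := Iff.rfl

@[simp] lemma not_inl_inr {a : α} {b : β} : ¬ SumRel R S (.inl a) (.inr b) := id

@[simp] lemma not_inr_inl {a : β} {b : α} : ¬ SumRel R S (.inr a) (.inl b) := id

lemma and_swap_iff_eq [Std.Refl R] [Std.Antisymm R] [Std.Symm S] {p q : α ⊕ β} :
    SumRel R S p q ∧ SumRel R S q p ↔ SumRel (· = ·) S p q := by
  rcases p with a | a <;> rcases q with b | b <;> simp only [inl_inl, inr_inr, not_inl_inr,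
    not_inr_inl, and_false]
  · exact ⟨fun h => antisymm_of R h.1 h.2, by rintro rfl; exact ⟨refl_of R a, refl_of R a⟩⟩
  · exact ⟨And.left, fun h => ⟨h, symm_of S h⟩⟩

variable [MeasurableSpace α] [MeasurableSpace β]

lemma measurableSet_setOf (hR : MeasurableSet {p : α × α | R p.1 p.2})
    (hS : MeasurableSet {p : β × β | S p.1 p.2}) :
    MeasurableSet {p : (α ⊕ β) × (α ⊕ β) | SumRel R S p.1 p.2} := by
  have : {p : (α ⊕ β) × (α ⊕ β) | SumRel R S p.1 p.2} =
      Prod.map Sum.inl Sum.inl '' {p | R p.1 p.2} ∪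
        Prod.map Sum.inr Sum.inr '' {p | S p.1 p.2} := by
    ext ⟨a | a, b | b⟩ <;> simp
  rw [this]
  exact ((measurableEmbedding_inl.prodMap measurableEmbedding_inl).measurableSet_image.2 hR).union
    ((measurableEmbedding_inr.prodMap measurableEmbedding_inr).measurableSet_image.2 hS)

lemma isCBQO (hR : IsCBQO R) (hS : IsCBQO S) : IsCBQO (SumRel R S) := by
  refine ⟨?_, ?_, measurableSet_setOf hR.2.2.1 hS.2.2.1, ?_⟩
  · rintro (a | a)
    exacts [hR.1 a, hS.1 a]
  · rintro (a | a) (b | b) (c | c) h h' <;>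
      simp only [inl_inl, inr_inr, not_inl_inr, not_inr_inl] at h h' ⊢
    exacts [hR.2.1 h h', hS.2.1 h h']
  · rintro (a | a) <;> refine .of_preimage_inl_inr ?_ ?_
    exacts [hR.2.2.2 a, by simp, by simp, hS.2.2.2 a]

lemma isCBER (hR : IsCBER R) (hS : IsCBER S) : IsCBER (SumRel R S) := by
  refine ⟨⟨?_, ?_, ?_⟩, measurableSet_setOf hR.2.1 hS.2.1, ?_⟩
  · rintro (a | a)
    exacts [hR.1.refl a, hS.1.refl a]
  · rintro (a | a) (b | b) h <;>
      simp only [inl_inl, inr_inr, not_inl_inr, not_inr_inl] at h ⊢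
    exacts [hR.1.symm h, hS.1.symm h]
  · rintro (a | a) (b | b) (c | c) h h' <;>
      simp only [inl_inl, inr_inr, not_inl_inr, not_inr_inl] at h h' ⊢
    exacts [hR.1.trans h h', hS.1.trans h h']
  · rintro (a | a) <;> refine .of_preimage_inl_inr ?_ ?_
    exacts [hR.2.2 a, by simp, by simp, hS.2.2 a]

lemma isUnivCBER (hR : IsCBER R) (hS : IsUnivCBER S) : IsUnivCBER (SumRel R S) := by
  refine ⟨isCBER hR hS.1, fun W _ _ F hF => ?_⟩
  obtain ⟨f, hf, hfF⟩ := hS.2 W F hF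
  exact ⟨Sum.inr ∘ f, measurable_inr.comp hf, hfF⟩

end SumRel

section Restriction

variable {α β α' β' : Type} {R : α → α → Prop} {S : β → β → Prop}
  {R' : α' → α' → Prop} {S' : β' → β' → Prop} {f : α ⊕ β → α' ⊕ β'}

/-- `S'` has no strict pairs, so a reduction keeps the strict pairs of `R` in the left summand. -/
lemma SumRel.exists_inl_of_strict [Std.Symm S']
    (hf : ∀ p q, SumRel R S p q ↔ SumRel R' S' (f p) (f q)) {x y : α} (hxy : R x y ∧ ¬ R y x) :
    ∃ x' y', f (.inl x) = .inl x' ∧ f (.inl y) = .inl y' := by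
  have h := (hf (.inl x) (.inl y)).1 hxy.1
  have h' : ¬ SumRel R' S' (f (.inl y)) (f (.inl x)) := fun h' => hxy.2 ((hf _ _).2 h')
  rcases hx : f (.inl x) with x' | x' <;> rcases hy : f (.inl y) with y' | y' <;>
    rw [hx, hy] at h h'
  · exact ⟨x', y', rfl, rfl⟩
  · exact absurd h SumRel.not_inl_inr
  · exact absurd h SumRel.not_inr_inl
  · exact absurd (symm_of S' h) h'

lemma SumRel.exists_measurable_restriction [MeasurableSpace α] [MeasurableSpace β]
    [MeasurableSpace α'] [MeasurableSpace β'] [Std.Symm S'] (hfm : Measurable f)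
    (hf : ∀ p q, SumRel R S p q ↔ SumRel R' S' (f p) (f q))
    (hstrict : ∀ x, ∃ y, (R x y ∧ ¬ R y x) ∨ (R y x ∧ ¬ R x y)) :
    ∃ g : α → α', Measurable g ∧ (∀ x, f (.inl x) = .inl (g x)) ∧
      ∀ a b, R a b ↔ R' (g a) (g b) := by
  have hinl : ∀ x, ∃ x', f (.inl x) = .inl x' := fun x => by
    obtain ⟨y, h | h⟩ := hstrict x
    · obtain ⟨x', -, hx', -⟩ := exists_inl_of_strict hf h
      exact ⟨x', hx'⟩
    · obtain ⟨-, x', -, hx'⟩ := exists_inl_of_strict hf h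
      exact ⟨x', hx'⟩
  choose g hg using hinl
  refine ⟨g, (measurableEmbedding_inl (β := β')).measurable_comp_iff.1 ?_, hg, fun a b => ?_⟩
  · simpa [comp_def, hg] using hfm.comp measurable_inl
  · simpa [hg] using hf (.inl a) (.inl b)

end Restriction

section LinearlyOrderedClasses

variable {X X' : Type} {E : X → X → Prop} {F : X' → X' → Prop} {le : X → X → Prop}
  {le' : X' → X' → Prop}

lemma exists_strict_and_le [Std.Symm E] [Std.Antisymm le] [Std.Total le] {x y : X}
    (hyx : y ≠ x) (hxy : E x y) :
    (E x y ∧ le x y) ∧ ¬ (E y x ∧ le y x) ∨ (E y x ∧ le y x) ∧ ¬ (E x y ∧ le x y) := by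
  rcases total_of le x y with h | h
  · exact .inl ⟨⟨hxy, h⟩, fun h' => hyx (antisymm_of le h'.2 h)⟩
  · exact .inr ⟨⟨symm_of E hxy, h⟩, fun h' => hyx (antisymm_of le h h'.2)⟩

/-- Since `≤` and `≤'` are total, `E` is recovered from `E ∩ ≤` by symmetrizing. -/
lemma iff_of_iff_and_le [Std.Symm E] [Std.Symm F] [Std.Total le] [Std.Total le'] {g : X → X'}
    (hg : ∀ a b, E a b ∧ le a b ↔ F (g a) (g b) ∧ le' (g a) (g b)) (a b : X) :
    E a b ↔ F (g a) (g b) := by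
  constructor
  · intro hab
    rcases total_of le a b with h | h
    · exact ((hg a b).1 ⟨hab, h⟩).1
    · exact symm_of F ((hg b a).1 ⟨symm_of E hab, h⟩).1
  · intro hab
    rcases total_of le' (g a) (g b) with h | h
    · exact ((hg a b).2 ⟨hab, h⟩).1
    · exact symm_of E ((hg b a).2 ⟨symm_of F hab, h⟩).1

end LinearlyOrderedClasses

lemma ZMod.forall_of_add_one {k : ℕ} [NeZero k] {p : ZMod k → Prop} {a : ZMod k} (ha : p a)
    (hp : ∀ i, p i → p (i + 1)) (i : ZMod k) : p i := by
  have hn : ∀ n : ℕ, p (a + n) := by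
    intro n
    induction n with
    | zero => simpa using ha
    | succ n ih => simpa [add_assoc] using hp _ ih
  simpa using hn (i - a).val

/-- `φ` and `ψ` map the bottom and top rows of the crown `a i < b i, b (i + 1)` of size `k` into
those of the crown of size `m`, preserving comparability in both directions. -/
lemma ZMod.eq_of_crown_embedding {k m : ℕ} [NeZero k] [NeZero m] [Nontrivial (ZMod k)]
    {φ ψ : ZMod k → ZMod m} (hφ : Injective φ) (hψ : Injective ψ)
    (h : ∀ i j, (j = i ∨ j = i + 1) ↔ (ψ j = φ i ∨ ψ j = φ i + 1)) : k = m := by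
  have hsucc : ∀ i : ZMod k, i ≠ i + 1 := fun i => left_ne_add.2 one_ne_zero
  have hφψ : ∀ i, ∃ j, ψ j = φ i + 1 := fun i => by
    have h₀ := (h i i).1 (.inl rfl)
    have h₁ := (h i (i + 1)).1 (.inr rfl)
    have hne := hψ.ne (hsucc i)
    rcases h₀ with h₀ | h₀
    · rcases h₁ with h₁ | h₁
      · exact absurd (h₀.trans h₁.symm) hne
      · exact ⟨_, h₁⟩
    · exact ⟨_, h₀⟩
  have hψφ : ∀ j, ∃ i, φ i = ψ j := fun j => by
    have h₀ := (h j j).1 (.inl rfl)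
    have h₁ := (h (j - 1) j).1 (.inr (sub_add_cancel j 1).symm)
    have hne := hφ.ne (hsucc (j - 1))
    rw [sub_add_cancel] at hne
    rcases h₀ with h₀ | h₀
    · exact ⟨j, h₀.symm⟩
    · rcases h₁ with h₁ | h₁
      · exact ⟨_, h₁.symm⟩
      · exact absurd (add_right_cancel (h₁.symm.trans h₀)) hne
  have hclosed : ∀ y ∈ Set.range φ, y + 1 ∈ Set.range φ := by
    rintro _ ⟨i, rfl⟩
    obtain ⟨j, hj⟩ := hφψ i
    obtain ⟨i', hi'⟩ := hψφ j
    exact ⟨i', hi'.trans hj⟩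
  have hsurj : Surjective φ := fun y =>
    ZMod.forall_of_add_one (p := (· ∈ Set.range φ)) (Set.mem_range_self 0) hclosed y
  simpa using Fintype.card_of_bijective ⟨hφ, hsurj⟩

/-- Vertex `i` of the bottom (`b = false`) or top (`b = true`) row of the crown of size `n + 2`;
all crowns live on the common carrier `ℕ × ℕ × Bool`. -/
def crownVertex (n : ℕ) (i : ZMod (n + 2)) (b : Bool) : ℕ × ℕ × Bool := (n, i.val, b)

def CrownLT (U : Set ℕ) (x y : ℕ × ℕ × Bool) : Prop :=
  ∃ n ∈ U, ∃ i : ZMod (n + 2), x = crownVertex n i false ∧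
    (y = crownVertex n i true ∨ y = crownVertex n (i + 1) true)

/-- The disjoint union of the crowns of sizes `n + 2`, `n ∈ U`, as a partial order on
`ℕ × ℕ × Bool`; the points outside these crowns are isolated. -/
def CrownLE (U : Set ℕ) (x y : ℕ × ℕ × Bool) : Prop := x = y ∨ CrownLT U x y

lemma crownVertex_inj {n : ℕ} {i j : ZMod (n + 2)} {b c : Bool} :
    crownVertex n i b = crownVertex n j c ↔ i = j ∧ b = c := by
  simp [crownVertex, (ZMod.val_injective _).eq_iff]

namespace CrownLT

variable {U : Set ℕ} {x y : ℕ × ℕ × Bool}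

lemma fst_mem (h : CrownLT U x y) : x.1 ∈ U := by
  obtain ⟨n, hn, i, rfl, -⟩ := h
  exact hn

lemma fst_eq (h : CrownLT U x y) : x.1 = y.1 := by
  obtain ⟨n, -, i, rfl, rfl | rfl⟩ := h <;> rfl

lemma bool_eq (h : CrownLT U x y) : x.2.2 = false ∧ y.2.2 = true := by
  obtain ⟨n, -, i, rfl, rfl | rfl⟩ := h <;> exact ⟨rfl, rfl⟩

lemma exists_crownVertex {n : ℕ} (h : CrownLT U x y) (hx : x.1 = n) :
    ∃ i j : ZMod (n + 2), x = crownVertex n i false ∧ y = crownVertex n j true := by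
  obtain ⟨m, -, i, rfl, rfl | rfl⟩ := h <;> obtain rfl : m = n := hx
  exacts [⟨i, i, rfl, rfl⟩, ⟨i, i + 1, rfl, rfl⟩]

end CrownLT

lemma crownLT_crownVertex_iff {U : Set ℕ} {n : ℕ} {i j : ZMod (n + 2)} :
    CrownLT U (crownVertex n i false) (crownVertex n j true) ↔ n ∈ U ∧ (j = i ∨ j = i + 1) := by
  constructor
  · rintro ⟨m, hm, k, hx, hy⟩
    obtain rfl : n = m := congrArg Prod.fst hx
    simp only [crownVertex_inj, and_true] at hx hy
    exact ⟨hm, hx ▸ hy⟩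
  · rintro ⟨hn, hj⟩
    refine ⟨n, hn, i, rfl, ?_⟩
    rcases hj with rfl | rfl <;> simp

namespace CrownLE

variable {U : Set ℕ}

instance : Std.Refl (CrownLE U) := ⟨fun _ => .inl rfl⟩

instance : Std.Antisymm (CrownLE U) where
  antisymm _ _ h h' := h.resolve_right fun hlt =>
    h'.elim (fun heq => by simpa [heq] using hlt.bool_eq) fun hlt' => by
      simpa [hlt.bool_eq] using hlt'.bool_eq

instance : IsTrans _ (CrownLE U) where
  trans _ _ _ h h' := by
    rcases h with rfl | h
    · exact h'
    rcases h' with rfl | h'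
    · exact .inr h
    · simpa [h.bool_eq] using h'.bool_eq

lemma and_not_iff {x y : ℕ × ℕ × Bool} : CrownLE U x y ∧ ¬ CrownLE U y x ↔ CrownLT U x y := by
  refine ⟨fun ⟨h, h'⟩ => h.resolve_left fun heq => h' (.inl heq.symm), fun h => ⟨.inr h, ?_⟩⟩
  rintro (heq | h')
  · simpa [heq] using h.bool_eq
  · simpa [h.bool_eq] using h'.bool_eq

lemma isCBQO : IsCBQO (CrownLE U) :=
  ⟨refl_of _, fun _ _ _ => trans_of _, (Set.to_countable _).measurableSet,
    fun _ => Set.to_countable _⟩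

end CrownLE

/-- Two rows realizing a crown of size `k` inside `CrownLE V` lie in a single crown of `V`, which
therefore has size `k`. -/
lemma CrownLT.exists_eq_add_two {V : Set ℕ} {k : ℕ} [NeZero k] [Nontrivial (ZMod k)]
    {u w : ZMod k → ℕ × ℕ × Bool} (hu : Injective u) (hw : Injective w)
    (h : ∀ i j, (j = i ∨ j = i + 1) ↔ CrownLT V (u i) (w j)) : ∃ m ∈ V, k = m + 2 := by
  have hlt : ∀ i, CrownLT V (u i) (w i) := fun i => (h i i).1 (.inl rfl)
  set M := (u 0).1
  have hM : ∀ i, (u i).1 = M := ZMod.forall_of_add_one rfl fun i hi =>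
    (hlt (i + 1)).fst_eq.trans (((h i (i + 1)).1 (.inr rfl)).fst_eq.symm.trans hi)
  choose φ ψ hφ hψ using fun i => (hlt i).exists_crownVertex (hM i)
  have hMV : M ∈ V := (hlt 0).fst_mem
  refine ⟨M, hMV, ZMod.eq_of_crown_embedding (φ := φ) (ψ := ψ)
    (fun i i' e => hu (by rw [hφ, hφ, e])) (fun j j' e => hw (by rw [hψ, hψ, e])) fun i j => ?_⟩
  rw [h, hφ, hψ, crownLT_crownVertex_iff, and_iff_right hMV]

theorem CrownLE.subset_of_reduction {Z : Type} {S : Z → Z → Prop} [Std.Symm S] {U V : Set ℕ}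
    {f : (ℕ × ℕ × Bool) ⊕ Z → (ℕ × ℕ × Bool) ⊕ Z}
    (hf : ∀ p q, SumRel (CrownLE U) S p q ↔ SumRel (CrownLE V) S (f p) (f q)) : U ⊆ V := by
  intro n hn
  have hlt : ∀ i j : ZMod (n + 2),
      (j = i ∨ j = i + 1) ↔ CrownLT U (crownVertex n i false) (crownVertex n j true) := by
    simp [crownLT_crownVertex_iff, hn]
  choose u w hu hw using fun i =>
    SumRel.exists_inl_of_strict hf (CrownLE.and_not_iff.2 ((hlt i i).1 (.inl rfl)))
  have hiff : ∀ {x y x' y'}, f (.inl x) = .inl x' → f (.inl y) = .inl y' →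
      (CrownLE U x y ↔ CrownLE V x' y') := fun {x y _ _} hx hy => by
    simpa [hx, hy] using hf (.inl x) (.inl y)
  have hinj : ∀ {x y x'}, f (.inl x) = .inl x' → f (.inl y) = .inl x' → x = y := fun hx hy =>
    antisymm_of (CrownLE U) ((hiff hx hy).2 (refl_of _ _)) ((hiff hy hx).2 (refl_of _ _))
  have : Nontrivial (ZMod (n + 2)) := ZMod.nontrivial_iff.2 (by omega)
  obtain ⟨m, hm, hnm⟩ := CrownLT.exists_eq_add_two (V := V) (u := u) (w := w)
    (fun i i' e => (crownVertex_inj.1 (hinj (hu i) (e ▸ hu i'))).1)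
    (fun j j' e => (crownVertex_inj.1 (hinj (hw j) (e ▸ hw j'))).1) fun i j => by
      rw [hlt, ← CrownLE.and_not_iff, ← CrownLE.and_not_iff, hiff (hu i) (hw j),
        hiff (hw j) (hu i)]
  exact Nat.add_right_cancel hnm ▸ hm

/-- Distinct sets have `⊆`-incomparable codes. -/
def parityCode (S : Set ℕ) : Set ℕ := {n | n / 2 ∈ S ↔ Even n}

lemma eq_of_parityCode_subset {S T : Set ℕ} (h : parityCode S ⊆ parityCode T) : S = T := by
  ext m
  have h₀ := @h (2 * m)
  have h₁ := @h (2 * m + 1)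
  have hm : (2 * m + 1) / 2 = m := by omega
  simp only [parityCode, Set.mem_ofPred_eq, Nat.mul_div_cancel_left _ two_pos, even_two_mul,
    iff_true, hm, Nat.not_even_two_mul_add_one, iff_false] at h₀ h₁
  tauto

lemma nonempty_measurableEquiv_sum (C Z : Type) [MeasurableSpace C] [StandardBorelSpace C]
    [Countable C] [Infinite C] [MeasurableSpace Z] [StandardBorelSpace Z] [Uncountable Z] :
    Nonempty (Z ≃ᵐ C ⊕ Z) := by
  classical
  obtain ⟨D, -, hDc, hDi⟩ := Set.infinite_univ.exists_subset_countable_infinite (α := Z)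
  have hDm : MeasurableSet D := hDc.measurableSet
  have := hDm.standardBorel
  have := hDm.compl.standardBorel
  have := hDc.to_subtype
  have := hDi.to_subtype
  have hDc' : ¬ Countable ↥Dᶜ := fun h => not_countable (α := Z) <| Set.countable_univ_iff.1 <|
    Set.union_compl_self D ▸ hDc.union (Set.countable_coe_iff.1 h)
  exact ⟨(MeasurableEquiv.sumCompl hDm).symm.trans <|
    (PolishSpace.Equiv.measurableEquiv nonempty_equiv_of_countable.some).sumCongr
      (PolishSpace.measurableEquivOfNotCountable hDc' not_countable)⟩

theorem exists_incomparable_family_symmetrizing_to_universal {Z : Type} [MeasurableSpace Z]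
    [StandardBorelSpace Z] {Einf : Z → Z → Prop} (hEinf : IsUnivCBER Einf) :
    ∃ Q : Set ℕ → ((ℕ → Bool) → (ℕ → Bool) → Prop), (∀ i, IsCBQO (Q i)) ∧
      (∀ i j, i ≠ j → ¬ BorelReducible (Q i) (Q j)) ∧
      (∀ i, IsUnivCBER (fun a b => Q i a b ∧ Q i b a)) := by
  have := hEinf.uncountable
  have : Std.Symm Einf := hEinf.1.1.stdSymm
  obtain ⟨e⟩ := nonempty_measurableEquiv_sum (ℕ × ℕ × Bool) Z
  let e' : (ℕ → Bool) ≃ᵐ (ℕ × ℕ × Bool) ⊕ Z :=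
    (PolishSpace.measurableEquivNatBoolOfNotCountable not_countable).symm.trans e
  refine ⟨fun S a b => SumRel (CrownLE (parityCode S)) Einf (e' a) (e' b), fun S => ?_,
    fun S T hST => ?_, fun S => ?_⟩
  · exact (SumRel.isCBQO CrownLE.isCBQO hEinf.1.isCBQO).comap e'.measurable e'.injective
  · rintro ⟨f, -, hf⟩
    refine hST (eq_of_parityCode_subset
      (CrownLE.subset_of_reduction (S := Einf) (f := e' ∘ f ∘ e'.symm) fun p q => ?_))
    simpa using hf (e'.symm p) (e'.symm q)
  · simp only [SumRel.and_swap_iff_eq]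
    exact (SumRel.isUnivCBER isCBER_eq hEinf).comap e'

theorem asymmetric_quasiOrders_symmetrizing_to_universal
    (X X' Z : Type) [MeasurableSpace X] [StandardBorelSpace X]
    [MeasurableSpace X']
    [MeasurableSpace Z] [StandardBorelSpace Z]
    (E : X → X → Prop) (le : X → X → Prop)
    (F : X' → X' → Prop) (le' : X' → X' → Prop)
    (Einf : Z → Z → Prop)
    (hE : IsCBER E) (hF : IsCBER F)
    (hle : IsLinearOrder X (fun a b => le a b))
    (hle' : IsLinearOrder X' (fun a b => le' a b))
    (hE2 : ∀ x : X, ∃ y : X, y ≠ x ∧ E x y)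
    (hEinf : IsUnivCBER Einf) :
    -- the "2^{ℵ₀} pairwise incomparable" headline
    (∃ Q : Set ℕ → ((ℕ → Bool) → (ℕ → Bool) → Prop),
      (∀ i, IsCBQO (Q i)) ∧
      (∀ i j, i ≠ j → ¬ BorelReducible (Q i) (Q j)) ∧
      (∀ i, IsUnivCBER (fun a b => Q i a b ∧ Q i b a))) ∧
    -- any Borel reduction of `E(≤) ∨ E_∞` to `F(≤') ∨ E_∞` restricts to `X`,
    -- giving a Borel reduction of `E(≤)` to `F(≤')` and hence of `E` to `F`
    (∀ f : X ⊕ Z → X' ⊕ Z, Measurable f →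
      (∀ p q : X ⊕ Z,
        SumRel (fun a b => E a b ∧ le a b) Einf p q ↔
        SumRel (fun a b => F a b ∧ le' a b) Einf (f p) (f q)) →
      ∃ g : X → X', Measurable g ∧ (∀ x : X, f (Sum.inl x) = Sum.inl (g x)) ∧
        (∀ a b : X, (E a b ∧ le a b) ↔ (F (g a) (g b) ∧ le' (g a) (g b))) ∧
        (∀ a b : X, E a b ↔ F (g a) (g b))) ∧
    -- the symmetrization of `E(≤) ∨ E_∞` is `Δ(X) ∨ E_∞`
    (∀ p q : X ⊕ Z,
      (SumRel (fun a b => E a b ∧ le a b) Einf p q ∧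
       SumRel (fun a b => E a b ∧ le a b) Einf q p) ↔
      SumRel (fun a b : X => a = b) Einf p q) ∧
    -- `Δ(X) ∨ E_∞` is a universal countable Borel equivalence relation
    IsUnivCBER (SumRel (fun a b : X => a = b) Einf) := by
  have := hle
  have := hle'
  have : Std.Symm E := hE.1.stdSymm
  have : Std.Symm F := hF.1.stdSymm
  have : Std.Symm Einf := hEinf.1.1.stdSymm
  have : Std.Refl (fun a b => E a b ∧ le a b) := ⟨fun a => ⟨hE.1.refl a, refl_of le a⟩⟩
  have : Std.Antisymm (fun a b => E a b ∧ le a b) := ⟨fun _ _ h h' => antisymm_of le h.2 h'.2⟩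
  refine ⟨exists_incomparable_family_symmetrizing_to_universal hEinf, fun f hfm hf => ?_,
    fun _ _ => SumRel.and_swap_iff_eq, SumRel.isUnivCBER isCBER_eq hEinf⟩
  obtain ⟨g, hgm, hfg, hg⟩ := SumRel.exists_measurable_restriction hfm hf fun x =>
    (hE2 x).imp fun _ ⟨hyx, hxy⟩ => exists_strict_and_le hyx hxy
  exact ⟨g, hgm, hfg, hg, iff_of_iff_and_le hg⟩
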